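/- Let n ≥ 2 and M > 0. Then there exists σ > 0 such that for all ξ, η ∈ H = {x ∈ ℝⁿ : x₁ < 0} with |ξ−η| = 1, |ξ| ≤ M and |η| ≤ M, Boggio's biharmonic Green function of the half-space satisfies G_H(ξ,η) ≥ σ ξ₁² η₁². -/

import Mathlib

open MeasureTheory Real

noncomputable section

/-- Reflection `x* = (−x₁, x₂, …, xₙ)` across the hyperplane `∂H = {x₁ = 0}`. -/
def reflN (n : ℕ) (x : EuclideanSpace ℝ (Fin n)) : EuclideanSpace ℝ (Fin n) :=
  WithLp.toLp 2 (fun i : Fin n => if (i : ℕ) = 0 then -(x i) else x i)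

/-- `eₙ`, the Lebesgue volume of the unit ball of `ℝⁿ`. -/
def ballVol (n : ℕ) : ℝ := (volume (Metric.ball (0 : EuclideanSpace ℝ (Fin n)) 1)).toReal

/-- Boggio's biharmonic Green function of the half-space `H = {x ∈ ℝⁿ : x₁ < 0}`:
`G_H(x,y) = (1/(4 n eₙ)) |x−y|^{4−n} ∫₁^{|x*−y|/|x−y|} (v²−1) v^{1−n} dv`. -/
def boggioN (n : ℕ) (x y : EuclideanSpace ℝ (Fin n)) : ℝ :=
  (1 / (4 * n * ballVol n)) * dist x y ^ ((4:ℝ) - n) *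
    ∫ v in (1:ℝ)..(dist (reflN n x) y / dist x y), (v ^ 2 - 1) * v ^ ((1:ℝ) - n)


/-! At unit distance, `G_H(ξ,η)` is a positive constant times `∫₁^A (v²−1) v^{1−n} dv` with
`A = |ξ*−η|`, and `A² = 1 + 4ξ₁η₁`. For `|ξ|, |η| ≤ M` this gives `A ≤ B := √(1+4M²)`, so
the integrand is at least `(v²−1) B^{1−n}`, whose integral `(A−1)²(A+2)/3 · B^{1−n}` is at
least `(A−1)² B^{1−n}`. Finally `A − 1 = (A²−1)/(A+1) ≥ 4ξ₁η₁/(B+1)`. -/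

lemma ballVol_pos (n : ℕ) : 0 < ballVol n :=
  ENNReal.toReal_pos (Metric.measure_ball_pos volume 0 one_pos).ne' measure_ball_lt_top.ne

lemma dist_reflN_sq {n : ℕ} (hn : 0 < n) (x y : EuclideanSpace ℝ (Fin n)) :
    dist (reflN n x) y ^ 2 = dist x y ^ 2 + 4 * x ⟨0, hn⟩ * y ⟨0, hn⟩ := by
  have hterm (i : Fin n) : (reflN n x i - y i) ^ 2
      = (x i - y i) ^ 2 + if i = ⟨0, hn⟩ then 4 * x i * y i else 0 := by
    by_cases hi : i = ⟨0, hn⟩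
    · subst hi; simp only [reflN, if_true]; ring
    · have hi' : (i : ℕ) ≠ 0 := fun h => hi (Fin.ext h)
      simp [reflN, hi, hi']
  rw [EuclideanSpace.dist_eq, EuclideanSpace.dist_eq,
    Real.sq_sqrt (Finset.sum_nonneg fun _ _ => sq_nonneg _),
    Real.sq_sqrt (Finset.sum_nonneg fun _ _ => sq_nonneg _)]
  simp only [Real.dist_eq, sq_abs, hterm, Finset.sum_add_distrib, Finset.sum_ite_eq',
    Finset.mem_univ, if_true]

lemma apply_mul_apply_le_sq {ι : Type*} [Fintype ι] {x y : EuclideanSpace ℝ ι} {M : ℝ}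
    (hx : ‖x‖ ≤ M) (hy : ‖y‖ ≤ M) (i j : ι) : x i * y j ≤ M ^ 2 :=
  calc x i * y j ≤ ‖x i‖ * ‖y j‖ := by rw [← norm_mul]; exact le_norm_self _
    _ ≤ M * M := mul_le_mul ((PiLp.norm_apply_le x i).trans hx) ((PiLp.norm_apply_le y j).trans hy)
        (norm_nonneg _) ((norm_nonneg _).trans hx)
    _ = M ^ 2 := (sq M).symm

lemma sq_sub_one_div_le_sub_one {A B : ℝ} (hA : 1 ≤ A) (hAB : A ≤ B) :
    (A ^ 2 - 1) / (B + 1) ≤ A - 1 := by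
  rw [div_le_iff₀ (by linarith)]
  nlinarith

lemma integral_sq_sub_one (A : ℝ) :
    ∫ v in (1:ℝ)..A, (v ^ 2 - 1) = (A - 1) ^ 2 * (A + 2) / 3 := by
  rw [intervalIntegral.integral_sub ((continuous_pow 2).intervalIntegrable _ _)
    intervalIntegrable_const, integral_pow, intervalIntegral.integral_const]
  simp only [smul_eq_mul]; ring

lemma sub_one_sq_mul_rpow_le_integral {A B p : ℝ} (hA : 1 ≤ A) (hAB : A ≤ B) (hp : p ≤ 0) :
    (A - 1) ^ 2 * B ^ p ≤ ∫ v in (1:ℝ)..A, (v ^ 2 - 1) * v ^ p := by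
  have hcont : ContinuousOn (fun v : ℝ => (v ^ 2 - 1) * v ^ p) (Set.uIcc 1 A) := by
    refine ContinuousOn.mul (by fun_prop) fun v hv => ?_
    rw [Set.uIcc_of_le hA] at hv
    exact (Real.continuousAt_rpow_const v p (Or.inl (by linarith [hv.1]))).continuousWithinAt
  calc (A - 1) ^ 2 * B ^ p ≤ (A - 1) ^ 2 * (A + 2) / 3 * B ^ p := by
        refine mul_le_mul_of_nonneg_right ?_ (Real.rpow_nonneg (by linarith) p)
        nlinarith [sq_nonneg (A - 1)]
    _ = ∫ v in (1:ℝ)..A, (v ^ 2 - 1) * B ^ p := by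
        rw [intervalIntegral.integral_mul_const, integral_sq_sub_one]
    _ ≤ ∫ v in (1:ℝ)..A, (v ^ 2 - 1) * v ^ p := by
        refine intervalIntegral.integral_mono_on hA
          (Continuous.intervalIntegrable (by fun_prop) _ _) hcont.intervalIntegrable
          fun v hv => ?_
        have hv1 : 0 ≤ v ^ 2 - 1 := by nlinarith [hv.1]
        exact mul_le_mul_of_nonneg_left
          (Real.rpow_le_rpow_of_nonpos (by linarith [hv.1]) (hv.2.trans hAB) hp) hv1

lemma boggioN_of_dist_eq_one {n : ℕ} {x y : EuclideanSpace ℝ (Fin n)} (h : dist x y = 1) :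
    boggioN n x y = 1 / (4 * n * ballVol n) *
      ∫ v in (1:ℝ)..dist (reflN n x) y, (v ^ 2 - 1) * v ^ ((1:ℝ) - n) := by
  rw [boggioN, h, div_one, Real.one_rpow, mul_one]

/-- uniform local positivity of Boggio's Green function of the half-space:
for unit-distance points `ξ, η ∈ H` in a ball of radius `M`, `G_H(ξ,η) ≥ σ ξ₁² η₁²`. -/
theorem boggio_lower_bound_unit_distance (n : ℕ) (hn : 2 ≤ n) (M : ℝ) :
    ∃ σ > (0:ℝ), ∀ ξ η : EuclideanSpace ℝ (Fin n),
      ξ ⟨0, by omega⟩ < 0 → η ⟨0, by omega⟩ < 0 →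
      dist ξ η = 1 → ‖ξ‖ ≤ M → ‖η‖ ≤ M →
      boggioN n ξ η ≥ σ * (ξ ⟨0, by omega⟩) ^ 2 * (η ⟨0, by omega⟩) ^ 2 := by
  have hn0 : 0 < n := by omega
  have hp : (1:ℝ) - n ≤ 0 := sub_nonpos.2 (by exact_mod_cast hn0)
  have hc : 0 < 1 / (4 * n * ballVol n) := by
    have := ballVol_pos n
    have : (0:ℝ) < n := by exact_mod_cast hn0
    positivity
  set B := √(1 + 4 * M ^ 2)
  have hB : 1 ≤ B := Real.one_le_sqrt.mpr (by nlinarith [sq_nonneg M])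
  refine ⟨1 / (4 * n * ballVol n) * (16 * B ^ ((1:ℝ) - n) / (B + 1) ^ 2), by positivity,
    fun ξ η hξ hη hd hξM hηM => ?_⟩
  have ht : 0 < ξ ⟨0, hn0⟩ * η ⟨0, hn0⟩ := mul_pos_of_neg_of_neg hξ hη
  set A := dist (reflN n ξ) η
  have hA : A ^ 2 = 1 + 4 * (ξ ⟨0, hn0⟩ * η ⟨0, hn0⟩) := by rw [dist_reflN_sq hn0, hd]; ring
  have hA1 : 1 ≤ A := by nlinarith [dist_nonneg (x := reflN n ξ) (y := η)]
  have hAB : A ≤ B :=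
    Real.le_sqrt_of_sq_le (by nlinarith [apply_mul_apply_le_sq hξM hηM ⟨0, hn0⟩ ⟨0, hn0⟩])
  rw [boggioN_of_dist_eq_one hd, ge_iff_le]
  calc _ = 1 / (4 * n * ballVol n) * (((A ^ 2 - 1) / (B + 1)) ^ 2 * B ^ ((1:ℝ) - n)) := by
        rw [hA]; field_simp; ring
    _ ≤ 1 / (4 * n * ballVol n) * ((A - 1) ^ 2 * B ^ ((1:ℝ) - n)) := by
        gcongr
        · exact div_nonneg (by nlinarith) (by linarith)
        · exact sq_sub_one_div_le_sub_one hA1 hAB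
    _ ≤ _ := by gcongr; exact sub_one_sq_mul_rpow_le_integral hA1 hAB hp

end
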